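/- Let X be a finite set of points in ℝ² with the L1 metric, no two sharing x- or y-coordinates. If p1, p2 ∈ X are distinct and each forms a decreasing pair with every other point of X, then the line ⟨p1,p2⟩ contains all of X. -/
import Mathlib


/-- L1 (Manhattan) distance on the plane. -/
noncomputable def d1 (p q : ℝ × ℝ) : ℝ := |p.1 - q.1| + |p.2 - q.2|

/-- `btw1 a x b` : `x` is metrically between `a` and `b` in the L1 metric. -/
def btw1 (a x b : ℝ × ℝ) : Prop := d1 a b = d1 a x + d1 x b

/-- The line determined by `a` and `b` in the L1 metric. -/
def line1 (a b : ℝ × ℝ) : Set (ℝ × ℝ) :=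
  {x | btw1 x a b ∨ btw1 a x b ∨ btw1 a b x}

/-- The lines induced by a point set `X` in the L1 metric. -/
def lines1 (X : Set (ℝ × ℝ)) : Set (Set (ℝ × ℝ)) :=
  {L | ∃ a ∈ X, ∃ b ∈ X, a ≠ b ∧ L = line1 a b ∩ X}

/-- An increasing pair. -/
def IncrPair (p q : ℝ × ℝ) : Prop := (p.1 - q.1) * (p.2 - q.2) > 0

/-- A decreasing pair. -/
def DecrPair (p q : ℝ × ℝ) : Prop := (p.1 - q.1) * (p.2 - q.2) < 0

private lemma seg1 (a x b : ℝ) (h : a ≤ x ∧ x ≤ b ∨ b ≤ x ∧ x ≤ a) :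
    |a - b| = |a - x| + |x - b| := by
  rcases h with ⟨h1, h2⟩ | ⟨h1, h2⟩
  · rw [abs_of_nonpos (by linarith), abs_of_nonpos (by linarith),
      abs_of_nonpos (by linarith)]; ring
  · rw [abs_of_nonneg (by linarith), abs_of_nonneg (by linarith),
      abs_of_nonneg (by linarith)]; ring

private lemma btw1_of_coords (a x b : ℝ × ℝ)
    (hx : a.1 ≤ x.1 ∧ x.1 ≤ b.1 ∨ b.1 ≤ x.1 ∧ x.1 ≤ a.1)
    (hy : a.2 ≤ x.2 ∧ x.2 ≤ b.2 ∨ b.2 ≤ x.2 ∧ x.2 ≤ a.2) :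
    btw1 a x b := by
  unfold btw1 d1
  rw [seg1 _ _ _ hx, seg1 _ _ _ hy]; ring

private lemma d1_comm (u v : ℝ × ℝ) : d1 u v = d1 v u := by
  unfold d1; rw [abs_sub_comm, abs_sub_comm v.2]

/-- If `a` is above-left of `b` and `q` forms a decreasing pair with (or equals)
each of `a`, `b`, then `q` lies on the line through `a` and `b`. -/
private lemma key (a b q : ℝ × ℝ) (hx : a.1 < b.1) (hy : b.2 < a.2)
    (hqa : DecrPair a q ∨ q = a) (hqb : DecrPair b q ∨ q = b) :
    q ∈ line1 a b := by
  rcases hqa with hqa | rfl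
  · rcases hqb with hqb | rfl
    · unfold DecrPair at hqa hqb
      rcases mul_neg_iff.mp hqa with ⟨ha1, ha2⟩ | ⟨ha1, ha2⟩ <;>
        rcases mul_neg_iff.mp hqb with ⟨hb1, hb2⟩ | ⟨hb1, hb2⟩
      · -- q left of a, above a; left of b, above b : btw1 q a b
        exact Or.inl (btw1_of_coords q a b
          (Or.inl ⟨by linarith, by linarith⟩) (Or.inr ⟨by linarith, by linarith⟩))
      · -- q left-above a, right-below b : impossible since a.1 < b.1
        exact absurd hx (by intro _; linarith)
      · -- q right-below a, left-above b : rectangle, btw1 a q b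
        exact Or.inr (Or.inl (btw1_of_coords a q b
          (Or.inl ⟨by linarith, by linarith⟩) (Or.inr ⟨by linarith, by linarith⟩)))
      · -- q right-below a and right-below b : btw1 a b q
        exact Or.inr (Or.inr (btw1_of_coords a b q
          (Or.inl ⟨by linarith, by linarith⟩) (Or.inr ⟨by linarith, by linarith⟩)))
    · -- q = b
      exact Or.inr (Or.inr (btw1_of_coords a q q
        (Or.inl ⟨le_of_lt hx, le_refl _⟩) (Or.inr ⟨le_refl _, le_of_lt hy⟩)))
  · -- q = a
    exact Or.inr (Or.inl (btw1_of_coords q q b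
      (Or.inl ⟨le_refl _, le_of_lt hx⟩) (Or.inr ⟨le_of_lt hy, le_refl _⟩)))

private lemma line1_comm (a b : ℝ × ℝ) : line1 a b = line1 b a := by
  ext x
  simp only [line1, Set.mem_setOf_eq, btw1]
  constructor
  · rintro (h | h | h)
    · exact Or.inr (Or.inr (by rw [d1_comm b x, d1_comm a b, d1_comm x a] at *; linarith))
    · exact Or.inr (Or.inl (by rw [d1_comm b a, d1_comm b x, d1_comm x a] at *; linarith))
    · exact Or.inl (by rw [d1_comm x a, d1_comm b a, d1_comm x b] at *; linarith)
  · rintro (h | h | h)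
    · exact Or.inr (Or.inr (by rw [d1_comm a x, d1_comm b a, d1_comm x b] at *; linarith))
    · exact Or.inr (Or.inl (by rw [d1_comm a b, d1_comm a x, d1_comm x b] at *; linarith))
    · exact Or.inl (by rw [d1_comm x b, d1_comm a b, d1_comm x a] at *; linarith)

theorem two_universal_decreasing_points (X : Finset (ℝ × ℝ))
    (hcoord : ∀ p ∈ X, ∀ q ∈ X, p ≠ q → p.1 ≠ q.1 ∧ p.2 ≠ q.2)
    (p1 p2 : ℝ × ℝ) (hp1 : p1 ∈ X) (hp2 : p2 ∈ X) (hne : p1 ≠ p2)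
    (h1 : ∀ q ∈ X, q ≠ p1 → DecrPair p1 q)
    (h2 : ∀ q ∈ X, q ≠ p2 → DecrPair p2 q) :
    ↑X ⊆ line1 p1 p2 := by
  have hdec : DecrPair p1 p2 := h1 p2 hp2 (Ne.symm hne)
  intro q hq
  simp only [Finset.mem_coe] at hq
  have hq1 : DecrPair p1 q ∨ q = p1 := by
    by_cases h : q = p1
    · exact Or.inr h
    · exact Or.inl (h1 q hq h)
  have hq2 : DecrPair p2 q ∨ q = p2 := by
    by_cases h : q = p2
    · exact Or.inr h
    · exact Or.inl (h2 q hq h)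
  rcases mul_neg_iff.mp hdec with ⟨ha, hb⟩ | ⟨ha, hb⟩
  · -- p1.1 > p2.1, p1.2 < p2.2 : p2 is above-left of p1
    rw [line1_comm]
    exact key p2 p1 q (by linarith) (by linarith) hq2 hq1
  · exact key p1 p2 q (by linarith) (by linarith) hq1 hq2
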